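/- Under the randomized voting caterpillar rule applied to the superman-kryptonite tournament on n players, player 1 wins with probability 1/2 − 1/(n(n−1)) and player n wins with probability 1/n. -/

import Mathlib

abbrev Tournament (n : ℕ) := Fin n → Fin n → Bool

def IsTournament {n : ℕ} (T : Tournament n) : Prop :=
  (∀ i, T i i = false) ∧ ∀ i j : Fin n, i ≠ j → T i j = !T j i

def CondorcetWinner {n : ℕ} (T : Tournament n) (i : Fin n) : Prop :=
  ∀ j, j ≠ i → T i j = true

def PairAdjacent {n : ℕ} (i j : Fin n) (T T' : Tournament n) : Prop :=
  ∀ a b : Fin n, ¬((a = i ∧ b = j) ∨ (a = j ∧ b = i)) → T a b = T' a b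

def SAdjacent {n : ℕ} (S : Finset (Fin n)) (T T' : Tournament n) : Prop :=
  ∀ a b : Fin n, (a ∉ S ∨ b ∉ S) → T a b = T' a b

def IsRule {n : ℕ} (r : Tournament n → Fin n → ℝ) : Prop :=
  ∀ T, IsTournament T → (∀ i, 0 ≤ r T i) ∧ (∑ i, r T i) = 1

def CondorcetConsistent {n : ℕ} (r : Tournament n → Fin n → ℝ) : Prop :=
  ∀ T, IsTournament T → ∀ i, CondorcetWinner T i → r T i = 1

def SNM2 {n : ℕ} (r : Tournament n → Fin n → ℝ) (α : ℝ) : Prop :=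
  ∀ T T' : Tournament n, IsTournament T → IsTournament T' →
    ∀ i j : Fin n, i ≠ j → PairAdjacent i j T T' →
      r T' i + r T' j - r T i - r T j ≤ α

def SNMk {n : ℕ} (k : ℕ) (r : Tournament n → Fin n → ℝ) (α : ℝ) : Prop :=
  ∀ S : Finset (Fin n), S.card ≤ k → ∀ T T' : Tournament n,
    IsTournament T → IsTournament T' → SAdjacent S T T' →
      (∑ i ∈ S, r T' i) - (∑ i ∈ S, r T i) ≤ α

def flipTo {n : ℕ} (i j : Fin n) (T : Tournament n) : Tournament n :=
  fun a b => if a = i ∧ b = j then true else if a = j ∧ b = i then false else T a b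

def winCount {n : ℕ} (T : Tournament n) (i : Fin n) : ℕ :=
  (Finset.univ.filter fun j => T i j = true).card

def cyclicT (m w : ℕ) : Tournament m :=
  fun i j => decide (1 ≤ (j.val + m - i.val) % m ∧ (j.val + m - i.val) % m ≤ w)

def skT (n : ℕ) : Tournament n :=
  fun i j =>
    if i.val = n - 1 ∧ j.val = 0 then true
    else if i.val = 0 ∧ j.val = n - 1 then false
    else decide (i.val < j.val)

def catWinner {n : ℕ} (hn : 0 < n) (T : Tournament n) (π : Equiv.Perm (Fin n)) : Fin n :=
  (((List.finRange n).map π).drop 1).foldl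
    (fun w x => if T w x = true then w else x) (π ⟨0, hn⟩)

noncomputable def catRule (n : ℕ) (hn : 0 < n) : Tournament n → Fin n → ℝ :=
  fun T i =>
    ((Finset.univ.filter fun π : Equiv.Perm (Fin n) => catWinner hn T π = i).card : ℝ) /
      (Nat.factorial n)

/-!
Player `0` (the paper's player 1) beats everyone except `Fin.last` (player `n`), who beats nobody
but `0`. Hence `0` keeps the lead from the moment it enters until `Fin.last` arrives, and
`Fin.last` survives only a match against `0`. So `Fin.last` wins iff it is drawn last (for
`n ≥ 3`), and `0` wins iff `Fin.last` is drawn before `0`, unless the two are drawn first and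
second, in which case `Fin.last` eliminates `0` in the opening match. For a uniform permutation
these events have probabilities `1/n`, `1/2` and `1/(n(n-1))`.
-/

open Equiv Finset
open scoped Nat

section PermutationCounts

variable {α : Type*} [Fintype α] [DecidableEq α]

theorem card_perm_fixing (s : Finset α) :
    #{σ : Perm α | ∀ x ∈ s, σ x = x} = (Fintype.card α - #s)! := by
  rw [← Fintype.card_subtype, ← Fintype.card_coe s, ← Fintype.card_subtype_compl,
    ← Fintype.card_perm, Fintype.card_congr (Perm.subtypeEquivSubtypePerm (· ∉ s))]
  simp only [not_not]

theorem card_perm_eqOn (ρ : Perm α) (s : Finset α) :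
    #{σ : Perm α | ∀ x ∈ s, σ x = ρ x} = (Fintype.card α - #s)! := by
  rw [← card_perm_fixing s]
  refine card_equiv (Equiv.mulLeft ρ⁻¹) fun σ => ?_
  simp [Equiv.eq_symm_apply, eq_comm]

theorem card_perm_symm_lt_mul_two [LinearOrder α] {a b : α} (hab : a ≠ b) :
    #{σ : Perm α | σ.symm a < σ.symm b} * 2 = (Fintype.card α)! := by
  have hswap :
      #{σ : Perm α | σ.symm a < σ.symm b} = #{σ : Perm α | ¬ σ.symm a < σ.symm b} := by
    refine card_equiv (Equiv.mulLeft (swap a b)) fun σ => ?_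
    have : σ.symm a ≠ σ.symm b := σ.symm.injective.ne hab
    simp only [mem_filter, mem_univ, true_and, not_lt, coe_mulLeft, Perm.mul_def, symm_trans,
      symm_swap, trans_apply, swap_apply_right, swap_apply_left]
    exact ⟨le_of_lt, fun h => h.lt_of_ne this⟩
  rw [mul_two]
  nth_rw 2 [hswap]
  rw [card_filter_add_card_filter_not, Finset.card_univ, Fintype.card_perm]

end PermutationCounts

section Caterpillar

variable {α : Type*} (T : α → α → Bool)

def matchWinner (w x : α) : α := if T w x then w else x

theorem matchWinner_eq_or_eq (w x : α) : matchWinner T w x = w ∨ matchWinner T w x = x := by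
  unfold matchWinner; split_ifs <;> simp

theorem foldl_matchWinner_mem (w : α) (l : List α) : l.foldl (matchWinner T) w ∈ w :: l := by
  induction l generalizing w with
  | nil => simp
  | cons x l ih =>
    have := ih (matchWinner T w x)
    rcases matchWinner_eq_or_eq T w x with h | h <;> rw [h] at this <;>
      simp only [List.foldl_cons, h, List.mem_cons] at this ⊢ <;> tauto

variable {T}

theorem foldl_matchWinner_ne {a w : α} {l : List α} (h : a ∉ w :: l) :
    l.foldl (matchWinner T) w ≠ a :=
  ne_of_mem_of_not_mem (foldl_matchWinner_mem T w l) h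

theorem foldl_matchWinner_eq_self {c : α} {l : List α} (h : ∀ x ∈ l, matchWinner T c x = c) :
    l.foldl (matchWinner T) c = c := by
  induction l with
  | nil => rfl
  | cons x l ih =>
    rw [List.foldl_cons, h x List.mem_cons_self]
    exact ih fun y hy => h y (List.mem_cons_of_mem _ hy)

theorem foldl_matchWinner_eq_of_beats {c w : α} {l : List α} (hc : c ∈ w :: l)
    (hbeats : ∀ x ∈ w :: l, matchWinner T c x = c ∧ matchWinner T x c = c) :
    l.foldl (matchWinner T) w = c := by
  rcases List.mem_cons.1 hc with rfl | hc
  · exact foldl_matchWinner_eq_self fun x hx => (hbeats x (List.mem_cons_of_mem _ hx)).1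
  obtain ⟨u, v, rfl⟩ := List.append_of_mem hc
  have hw : u.foldl (matchWinner T) w ∈ w :: (u ++ c :: v) := by
    have := foldl_matchWinner_mem T w u
    simp only [List.mem_cons, List.mem_append] at this ⊢
    tauto
  rw [List.foldl_append, List.foldl_cons, (hbeats _ hw).2]
  exact foldl_matchWinner_eq_self fun x hx => (hbeats x (by simp [hx])).1

end Caterpillar

theorem catWinner_eq_foldl {n : ℕ} (hn : 0 < n) (T : Tournament n) (π : Perm (Fin n)) :
    catWinner hn T π = (List.ofFn π).tail.foldl (matchWinner T) (π ⟨0, hn⟩) := by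
  rw [List.ofFn_eq_map, ← List.drop_one]
  rfl

theorem idxOf_ofFn_perm {n : ℕ} (π : Perm (Fin n)) (x : Fin n) :
    (List.ofFn π).idxOf x = π.symm x := by
  simpa using (List.nodup_ofFn.2 π.injective).idxOf_getElem (π.symm x) (by simp)

section SupermanKryptonite

variable {n : ℕ}

theorem matchWinner_skT_zero_left {x : Fin (n + 2)} (hx : x ≠ Fin.last _) :
    matchWinner (skT (n + 2)) 0 x = 0 := by
  rw [Ne, Fin.ext_iff, Fin.val_last] at hx
  simp only [matchWinner, skT]
  split_ifs <;> grind

theorem matchWinner_skT_zero_right {w : Fin (n + 2)} (hw : w ≠ Fin.last _) :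
    matchWinner (skT (n + 2)) w 0 = 0 := by
  rw [Ne, Fin.ext_iff, Fin.val_last] at hw
  simp only [matchWinner, skT]
  split_ifs <;> grind

theorem matchWinner_skT_last_left {x : Fin (n + 2)} (hx : x ≠ 0) :
    matchWinner (skT (n + 2)) (Fin.last _) x = x := by
  rw [Ne, Fin.ext_iff, Fin.val_zero] at hx
  simp only [matchWinner, skT]
  split_ifs <;> grind

theorem matchWinner_skT_last_right {w : Fin (n + 2)} (hw : w ≠ 0) :
    matchWinner (skT (n + 2)) w (Fin.last _) = w := by
  rw [Ne, Fin.ext_iff, Fin.val_zero] at hw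
  simp only [matchWinner, skT]
  split_ifs <;> grind

theorem matchWinner_skT_zero_last :
    matchWinner (skT (n + 2)) 0 (Fin.last _) = Fin.last _ := by
  simp [matchWinner, skT]

theorem matchWinner_skT_last_zero :
    matchWinner (skT (n + 2)) (Fin.last _) 0 = Fin.last _ := by
  simp [matchWinner, skT]

local notation "𝓜" => matchWinner (skT (n + 2))

theorem foldl_skT_eq_zero {w : Fin (n + 2)} {l : List (Fin (n + 2))} (h0 : 0 ∈ w :: l)
    (hlast : Fin.last _ ∉ w :: l) : l.foldl 𝓜 w = 0 :=
  foldl_matchWinner_eq_of_beats h0 fun _ hx =>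
    have hx' := ne_of_mem_of_not_mem hx hlast
    ⟨matchWinner_skT_zero_left hx', matchWinner_skT_zero_right hx'⟩

theorem foldl_skT_last_cons_ne {y : Fin (n + 2)} {l : List (Fin (n + 2))} (hy : y ≠ 0)
    (hlast : Fin.last _ ∉ y :: l) : (y :: l).foldl 𝓜 (Fin.last _) ≠ Fin.last _ := by
  rw [List.foldl_cons, matchWinner_skT_last_left hy]
  exact foldl_matchWinner_ne hlast

theorem foldl_skT_last_eq_zero_iff {l : List (Fin (n + 2))} (hnd : (Fin.last _ :: l).Nodup)
    (h0 : 0 ∈ l) : l.foldl 𝓜 (Fin.last _) = 0 ↔ l.head? ≠ some 0 := by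
  obtain ⟨x, l, rfl⟩ := List.exists_cons_of_ne_nil (List.ne_nil_of_mem h0)
  simp only [List.nodup_cons, List.mem_cons, not_or] at hnd
  rw [List.foldl_cons, List.head?_cons, Ne, Option.some.injEq]
  by_cases hx : x = 0
  · subst hx
    rw [matchWinner_skT_last_zero]
    exact iff_of_false (foldl_matchWinner_ne (by simp [Fin.last_pos.ne, hnd.2.1])) (by simp)
  · rw [matchWinner_skT_last_left hx]
    exact iff_of_true (foldl_skT_eq_zero (by simpa [hx] using h0) (by simpa using hnd.1)) hx

theorem foldl_skT_last_ne_of_two_le {l : List (Fin (n + 2))} (hnd : (Fin.last _ :: l).Nodup)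
    (hl : 2 ≤ l.length) : l.foldl 𝓜 (Fin.last _) ≠ Fin.last _ := by
  obtain ⟨x, y, l, rfl⟩ : ∃ x y l', l = x :: y :: l' := by
    match l, hl with | x :: y :: l', _ => exact ⟨x, y, l', rfl⟩
  simp only [List.nodup_cons, List.mem_cons, not_or] at hnd
  by_cases hx : x = 0
  · subst hx
    rw [List.foldl_cons, matchWinner_skT_last_zero]
    exact foldl_skT_last_cons_ne (Ne.symm hnd.2.1.1) (by simpa using hnd.1.2)
  · exact foldl_skT_last_cons_ne hx (by simpa using hnd.1)

theorem foldl_skT_append_last {a : Fin (n + 2)} {u v : List (Fin (n + 2))}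
    (hlast_u : Fin.last _ ∉ a :: u) (hlast_v : Fin.last _ ∉ v) (h0 : 0 ∈ (a :: u) ++ v) :
    (u ++ Fin.last _ :: v).foldl 𝓜 a =
      if 0 ∈ a :: u then v.foldl 𝓜 (Fin.last _) else 0 := by
  rw [List.foldl_append, List.foldl_cons]
  split_ifs with h0u
  · rw [foldl_skT_eq_zero h0u hlast_u, matchWinner_skT_zero_last]
  · have hw := foldl_matchWinner_mem (skT (n + 2)) a u
    have hwlast : u.foldl 𝓜 a ≠ Fin.last _ := ne_of_mem_of_not_mem hw hlast_u
    rw [matchWinner_skT_last_right (ne_of_mem_of_not_mem hw h0u)]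
    exact foldl_skT_eq_zero (List.mem_cons_of_mem _ ((List.mem_append.1 h0).resolve_left h0u))
      (by simp [Ne.symm hwlast, hlast_v])

theorem foldl_skT_eq_zero_iff {a : Fin (n + 2)} {l : List (Fin (n + 2))} (hnd : (a :: l).Nodup)
    (h0 : 0 ∈ a :: l) (hlast : Fin.last _ ∈ a :: l) :
    l.foldl 𝓜 a = 0 ↔
      (a :: l).idxOf (Fin.last _) < (a :: l).idxOf 0 ∧
        ¬(a = Fin.last _ ∧ l.head? = some 0) := by
  have h0last : (0 : Fin (n + 2)) ≠ Fin.last _ := Fin.last_pos.ne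
  by_cases ha : a = Fin.last _
  · subst ha
    rw [foldl_skT_last_eq_zero_iff hnd (by simpa [h0last] using h0), List.idxOf_cons_self,
      List.idxOf_cons_ne _ (Ne.symm h0last)]
    simp
  · obtain ⟨u, v, rfl⟩ :=
      List.append_of_mem ((List.mem_cons.1 hlast).resolve_left (Ne.symm ha))
    rw [← List.cons_append] at hnd h0 ⊢
    obtain ⟨-, hnd_v, hdisj⟩ := List.nodup_append.1 hnd
    have hlast_u : Fin.last _ ∉ a :: u := fun h => hdisj _ h _ List.mem_cons_self rfl
    rw [foldl_skT_append_last hlast_u (List.nodup_cons.1 hnd_v).1 (by simpa [h0last] using h0),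
      List.idxOf_append, List.idxOf_append, if_neg hlast_u, List.idxOf_cons_self]
    by_cases h0u : 0 ∈ a :: u
    · have := List.idxOf_lt_length_of_mem h0u
      rw [if_pos h0u, if_pos h0u]
      exact iff_of_false (foldl_matchWinner_ne fun h => hdisj _ h0u _ h rfl)
        fun h => absurd h.1 (by omega)
    · rw [if_neg h0u, if_neg h0u, List.idxOf_cons_ne _ (Ne.symm h0last)]
      simp [ha]

theorem foldl_skT_eq_last_iff {a : Fin (n + 2)} {l : List (Fin (n + 2))} (hnd : (a :: l).Nodup)
    (h0 : 0 ∈ a :: l) (hlast : Fin.last _ ∈ a :: l) (hl : 2 ≤ l.length) :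
    l.foldl 𝓜 a = Fin.last _ ↔ (a :: l).getLast? = some (Fin.last _) := by
  have h0last : (0 : Fin (n + 2)) ≠ Fin.last _ := Fin.last_pos.ne
  by_cases ha : a = Fin.last _
  · subst ha
    refine iff_of_false (foldl_skT_last_ne_of_two_le hnd hl) fun h => ?_
    obtain ⟨x, l, rfl⟩ :=
      List.exists_cons_of_ne_nil (List.ne_nil_of_length_pos (l := l) (by omega))
    rw [List.getLast?_cons_cons] at h
    exact (List.nodup_cons.1 hnd).1 (List.mem_of_getLast? h)
  · obtain ⟨u, v, rfl⟩ :=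
      List.append_of_mem ((List.mem_cons.1 hlast).resolve_left (Ne.symm ha))
    rw [← List.cons_append] at hnd h0 ⊢
    obtain ⟨-, hnd_v, hdisj⟩ := List.nodup_append.1 hnd
    have hlast_u : Fin.last _ ∉ a :: u := fun h => hdisj _ h _ List.mem_cons_self rfl
    have hlast_v := (List.nodup_cons.1 hnd_v).1
    have hv : (Fin.last _ :: v).getLast? = some (Fin.last _) ↔ v = [] := by
      cases v with
      | nil => simp
      | cons y v =>
        rw [List.getLast?_cons_cons]
        exact iff_of_false (fun h => hlast_v (List.mem_of_getLast? h)) (List.cons_ne_nil _ _)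
    rw [foldl_skT_append_last hlast_u hlast_v (by simpa [h0last] using h0),
      List.getLast?_append_cons, hv]
    split_ifs with h0u
    · cases v with
      | nil => simp
      | cons y v =>
        exact iff_of_false (foldl_skT_last_cons_ne
          (hdisj _ h0u _ (List.mem_cons_of_mem _ List.mem_cons_self)).symm hlast_v)
          (List.cons_ne_nil _ _)
    · exact iff_of_false h0last (by rintro rfl; simp_all)

theorem catWinner_skT_eq_zero_iff (hn : 0 < n + 2) (π : Perm (Fin (n + 2))) :
    catWinner hn (skT (n + 2)) π = 0 ↔
      π.symm (Fin.last _) < π.symm 0 ∧ ¬(π 0 = Fin.last _ ∧ π 1 = 0) := by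
  have hL : List.ofFn π = π 0 :: List.ofFn (fun i => π i.succ) := List.ofFn_succ
  have hnd : (List.ofFn π).Nodup := List.nodup_ofFn.2 π.injective
  have hmem (x) : x ∈ List.ofFn π := List.mem_ofFn.2 ⟨π.symm x, π.apply_symm_apply x⟩
  rw [hL] at hnd hmem
  rw [catWinner_eq_foldl, Fin.mk_zero, hL, List.tail_cons,
    foldl_skT_eq_zero_iff hnd (hmem 0) (hmem _), ← hL, idxOf_ofFn_perm, idxOf_ofFn_perm]
  simp only [List.ofFn_succ, List.head?_cons, Option.some.injEq, Fin.val_fin_lt,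
    Fin.succ_zero_eq_one]

theorem catWinner_skT_eq_last_iff (hn : 0 < n + 2) (π : Perm (Fin (n + 2))) (h : 1 ≤ n) :
    catWinner hn (skT (n + 2)) π = Fin.last _ ↔ π (Fin.last _) = Fin.last _ := by
  have hL : List.ofFn π = π 0 :: List.ofFn (fun i => π i.succ) := List.ofFn_succ
  have hnd : (List.ofFn π).Nodup := List.nodup_ofFn.2 π.injective
  have hmem (x) : x ∈ List.ofFn π := List.mem_ofFn.2 ⟨π.symm x, π.apply_symm_apply x⟩
  rw [hL] at hnd hmem
  rw [catWinner_eq_foldl, Fin.mk_zero, hL, List.tail_cons,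
    foldl_skT_eq_last_iff hnd (hmem 0) (hmem _) (by simpa using h), ← hL,
    List.getLast?_eq_some_getLast (by simp), List.getLast_ofFn, Option.some.injEq]
  rfl

theorem card_catWinner_skT_eq_zero (hn : 0 < n + 2) :
    (#{π | catWinner hn (skT (n + 2)) π = 0} + n !) * 2 = (n + 2)! := by
  set before : Perm (Fin (n + 2)) → Prop := fun π => π.symm (Fin.last _) < π.symm 0
  set opening : Perm (Fin (n + 2)) → Prop := fun π => π 0 = Fin.last _ ∧ π 1 = 0
  have hopening : #{π | opening π} = n ! := by
    have hρ0 : (finRotate (n + 2)).symm 0 = Fin.last _ := by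
      rw [Equiv.symm_apply_eq, finRotate_last]
    have hρ1 : (finRotate (n + 2)).symm 1 = 0 := by
      rw [Equiv.symm_apply_eq, finRotate_apply, zero_add]
    have := card_perm_eqOn (finRotate (n + 2)).symm {0, 1}
    rw [Fintype.card_fin, card_pair (by simp), Nat.add_sub_cancel] at this
    simpa only [mem_insert, mem_singleton, forall_eq_or_imp, forall_eq, hρ0, hρ1] using this
  have hbefore : #{π | before π} * 2 = (n + 2)! := by
    simpa using card_perm_symm_lt_mul_two (Fin.last_pos.ne' : Fin.last (n + 1) ≠ 0)
  have hsub (π) (h : opening π) : before π := by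
    simp only [before, π.symm_apply_eq.2 h.1.symm, π.symm_apply_eq.2 h.2.symm, Fin.zero_lt_one]
  have hsplit := card_filter_add_card_filter_not (s := {π | before π}) (p := opening)
  rw [filter_filter, filter_filter,
    filter_congr fun π _ => and_iff_right_of_imp (hsub π)] at hsplit
  rw [filter_congr fun π _ => catWinner_skT_eq_zero_iff hn π, ← hopening, ← hbefore,
    ← hsplit, add_comm]

theorem card_catWinner_skT_eq_last (hn : 0 < n + 2) (h : 1 ≤ n) :
    #{π | catWinner hn (skT (n + 2)) π = Fin.last _} = (n + 1)! := by
  rw [filter_congr fun π _ => catWinner_skT_eq_last_iff hn π h]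
  simpa using card_perm_eqOn 1 {Fin.last (n + 1)}

end SupermanKryptonite

/-- Under the randomized voting caterpillar rule on the superman-kryptonite tournament,
player 1 wins with probability 1/2 - 1/(n(n-1)) and player n with probability 1/n. -/
theorem stmt_10 (n : ℕ) (hn : 3 ≤ n) :
    catRule n (by omega) (skT n) ⟨0, by omega⟩ = 1/2 - 1/((n:ℝ) * ((n:ℝ) - 1)) ∧
    catRule n (by omega) (skT n) ⟨n - 1, by omega⟩ = 1/(n:ℝ) := by
  obtain ⟨n, rfl⟩ : ∃ k, n = k + 2 := ⟨n - 2, by omega⟩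
  have hzero : (#{π | catWinner (by omega) (skT (n + 2)) π = 0} : ℝ) = (n + 2)! / 2 - n ! := by
    rw [eq_sub_iff_add_eq, eq_div_iff two_ne_zero]
    exact_mod_cast card_catWinner_skT_eq_zero (n := n) (by omega)
  have hfact : ((n + 2)! : ℝ) = (n + 2) * (n + 1) * n ! := by
    push_cast [Nat.factorial_succ]; ring
  refine ⟨?_, ?_⟩
  · rw [catRule, Fin.mk_zero, hzero, hfact]
    push_cast
    rw [show (n : ℝ) + 2 - 1 = n + 1 by ring]
    field_simp
  · rw [catRule, show (⟨n + 2 - 1, by omega⟩ : Fin (n + 2)) = Fin.last _ from rfl,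
      card_catWinner_skT_eq_last _ (by omega), hfact]
    push_cast [Nat.factorial_succ]
    field_simp
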